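/- Assume the domain D satisfies condition (A), let w : [0,T] → ℝ^d be a continuous path of bounded variation with w(0) ∈ D̄, and assume the Skorohod problem for w has a solution (ξ, φ). Then the total variation of ξ satisfies ‖ξ‖_{[s,t]} ≤ 2(√2 + 1) ‖w‖_{[s,t]} for all 0 ≤ s ≤ t ≤ T. -/

import Mathlib

open MeasureTheory ProbabilityTheory Set Filter
open scoped RealInnerProductSpace ENNReal NNReal

noncomputable section

namespace RSDE

/-- Euclidean space `ℝ^d`. -/
abbrev E (d : ℕ) : Type := EuclideanSpace ℝ (Fin d)

/-- The set `𝒩_{x,r}` of inward unit normal vectors at `x` with radius `r`. -/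
def normalsR {d : ℕ} (D : Set (E d)) (x : E d) (r : ℝ) : Set (E d) :=
  {v | ‖v‖ = 1 ∧ Metric.ball (x - r • v) r ∩ D = ∅}

/-- The set `𝒩_x` of inward unit normal vectors at `x`. -/
def normals {d : ℕ} (D : Set (E d)) (x : E d) : Set (E d) :=
  ⋃ r ∈ Ioi (0 : ℝ), normalsR D x r

/-- Condition (A): uniform exterior sphere condition with constant `r₀`. -/
def CondA {d : ℕ} (D : Set (E d)) (r₀ : ℝ) : Prop :=
  0 < r₀ ∧ ∀ x ∈ frontier D,
    normals D x = normalsR D x r₀ ∧ (normalsR D x r₀).Nonempty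

/-- Condition (B), with constants `δ`, `β`. -/
def CondB {d : ℕ} (D : Set (E d)) (δ β : ℝ) : Prop :=
  0 < δ ∧ 1 ≤ β ∧ ∀ x ∈ frontier D, ∃ l : E d, ‖l‖ = 1 ∧
    ∀ y ∈ Metric.ball x δ ∩ frontier D, ∀ v ∈ normals D y, 1 / β ≤ ⟪l, v⟫

/-- A `C^k_b` map between normed spaces: `k` times continuously differentiable,
bounded together with all derivatives up to order `k`. -/
def Cb (k : ℕ) {α β : Type*} [NormedAddCommGroup α] [NormedSpace ℝ α]
    [NormedAddCommGroup β] [NormedSpace ℝ β] (f : α → β) : Prop :=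
  ContDiff ℝ k f ∧ ∀ i : ℕ, i ≤ k → ∃ M : ℝ, ∀ x, ‖iteratedFDeriv ℝ i f x‖ ≤ M

/-- Condition (C), with function `f` and constant `γ`. -/
def CondC {d : ℕ} (D : Set (E d)) (f : E d → ℝ) (γ : ℝ) : Prop :=
  0 < γ ∧ Cb 2 f ∧
    ∀ x ∈ frontier D, ∀ y ∈ closure D, ∀ v ∈ normals D x,
      0 ≤ ⟪y - x, v⟫ + (1 / γ) * ⟪gradient f x, v⟫ * ‖y - x‖ ^ 2

/-- Total variation `‖f‖_{[s,t]}` of a path on the interval `[s,t]`. -/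
def tv {α : Type*} [PseudoEMetricSpace α] (f : ℝ → α) (s t : ℝ) : ℝ :=
  (eVariationOn f (Icc s t)).toReal

/-- Oscillation `‖f‖_{∞,[s,t]} = max_{s ≤ u ≤ v ≤ t} |f u - f v|` of a path on `[s,t]`. -/
def osc {α : Type*} [NormedAddCommGroup α] (f : ℝ → α) (s t : ℝ) : ℝ :=
  ⨆ p : Icc s t × Icc s t, ‖f p.1 - f p.2‖

/-- Hölder seminorm `‖f‖_{ℋ,[s,t],θ}` of a path on `[s,t]`. -/
def hol {α : Type*} [NormedAddCommGroup α] (f : ℝ → α) (s t θ : ℝ) : ℝ :=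
  ⨆ p : {q : ℝ × ℝ // s ≤ q.1 ∧ q.1 < q.2 ∧ q.2 ≤ t},
    ‖f p.1.2 - f p.1.1‖ / (p.1.2 - p.1.1) ^ θ

/-- `(ξ, φ)` is a solution of the Skorohod problem on `D̄` for the path `w` on `[0,T]`:
`ξ` is continuous with values in `D̄`, `ξ = w + φ`, `φ` is of bounded variation, starts at `0`,
and is obtained by integrating inward unit normal vectors against the measure `d‖φ‖_{[0,·]}`,
which is carried by `{s : ξ s ∈ ∂D}`. -/
structure IsSkorohod {d : ℕ} (D : Set (E d)) (T : ℝ) (w ξ φ : ℝ → E d) : Prop where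
  cont_xi : ContinuousOn ξ (Icc 0 T)
  mem_closure : ∀ t ∈ Icc 0 T, ξ t ∈ closure D
  init : ξ 0 = w 0
  eq_add : ∀ t ∈ Icc 0 T, ξ t = w t + φ t
  cont_phi : ContinuousOn φ (Icc 0 T)
  bv_phi : BoundedVariationOn φ (Icc 0 T)
  init_phi : φ 0 = 0
  reflection : ∃ (μ : Measure ℝ) (nv : ℝ → E d), IsFiniteMeasure μ ∧
    (∀ t ∈ Icc 0 T, μ (Icc 0 t) = eVariationOn φ (Icc 0 t)) ∧
    (∀ t ∈ Icc 0 T, φ t = ∫ s in Icc 0 t, nv s ∂μ) ∧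
    (∀ᵐ s ∂μ, s ∈ Icc 0 T ∧ ξ s ∈ frontier D ∧ nv s ∈ normals D (ξ s))

/-- `B` is an `ℝ^n`-valued `ℱ_t`-Brownian motion under `P`. -/
structure IsBM {n : ℕ} {Ω : Type*} {mΩ : MeasurableSpace Ω} (P : Measure Ω)
    (F : Filtration ℝ mΩ) (B : ℝ → Ω → E n) : Prop where
  init : ∀ ω, B 0 ω = 0
  cont : ∀ ω, Continuous fun t => B t ω
  adapted : Adapted F B
  indep_increments : ∀ s t : ℝ, 0 ≤ s → s ≤ t →
    Indep (MeasurableSpace.comap (fun ω => B t ω - B s ω) inferInstance) (F s) P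
  gauss_coord : ∀ s t : ℝ, 0 ≤ s → s ≤ t → ∀ i : Fin n,
    P.map (fun ω => B t ω i - B s ω i) = gaussianReal 0 (Real.toNNReal (t - s))
  coord_indep : ∀ s t : ℝ, 0 ≤ s → s ≤ t →
    iIndepFun (m := fun _ : Fin n => (inferInstance : MeasurableSpace ℝ))
      (fun i ω => B t ω i - B s ω i) P

/-- `v` is the Riemann–Stieltjes integral `∫_s^t H(u) dw(u)`, defined as the limit of
Riemann sums along the uniform partitions of `[s,t]`. -/
def IsRSI {α β : Type*} [NormedAddCommGroup α] [NormedSpace ℝ α]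
    [NormedAddCommGroup β] [NormedSpace ℝ β]
    (H : ℝ → (α →L[ℝ] β)) (w : ℝ → α) (s t : ℝ) (v : β) : Prop :=
  Tendsto (fun N : ℕ => ∑ k ∈ Finset.range N,
      (H (s + (t - s) * k / N)) (w (s + (t - s) * (k + 1) / N) - w (s + (t - s) * k / N)))
    atTop (nhds v)

/-- Scalar Riemann–Stieltjes integral `∫_s^t h dw` along uniform partitions. -/
def IsRSreal (h w : ℝ → ℝ) (s t : ℝ) (v : ℝ) : Prop :=
  Tendsto (fun N : ℕ => ∑ k ∈ Finset.range N,
      h (s + (t - s) * k / N) * (w (s + (t - s) * (k + 1) / N) - w (s + (t - s) * k / N)))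
    atTop (nhds v)

/-- Riemann sum for the Itô integral `∫_0^t H dB` along the partition `t_k = tk/N`. -/
def itoSum {n d : ℕ} {Ω : Type*} (H : ℝ → Ω → (E n →L[ℝ] E d)) (B : ℝ → Ω → E n)
    (t : ℝ) (N : ℕ) (ω : Ω) : E d :=
  ∑ k ∈ Finset.range N, (H (t * k / N) ω) (B (t * (k + 1) / N) ω - B (t * k / N) ω)

/-- `I` is the Itô integral process `I(t) = ∫_0^t H(s) dB(s)`: for each `t ≥ 0` the Riemann
sums along the uniform partitions of `[0,t]` converge in probability to `I(t)`. -/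
def IsItoIntegral {n d : ℕ} {Ω : Type*} [MeasurableSpace Ω] (P : Measure Ω)
    (H : ℝ → Ω → (E n →L[ℝ] E d)) (B : ℝ → Ω → E n) (I : ℝ → Ω → E d) : Prop :=
  ∀ t : ℝ, 0 ≤ t → TendstoInMeasure P (fun N => itoSum H B t N) atTop (I t)

/-- `(X, Φ)` is a solution of the reflecting SDE `dX = σ(X) dB + b(X) dt + dΦ` on `D̄`
with initial condition `x`: `X, Φ` are `ℱ_t`-adapted and, almost surely, `(X, Φ)` solves
the Skorohod problem for `Y(t) = x + ∫_0^t σ(X) dB + ∫_0^t b(X) ds`. -/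
structure IsRSDE {n d : ℕ} {Ω : Type*} {mΩ : MeasurableSpace Ω} (P : Measure Ω)
    (F : Filtration ℝ mΩ) (B : ℝ → Ω → E n) (D : Set (E d))
    (σ : E d → (E n →L[ℝ] E d)) (b : E d → E d) (T : ℝ) (x : E d)
    (X Φ : ℝ → Ω → E d) : Prop where
  adapted_X : Adapted F X
  adapted_Φ : Adapted F Φ
  sol : ∃ I : ℝ → Ω → E d, IsItoIntegral P (fun s ω => σ (X s ω)) B I ∧
    ∀ᵐ ω ∂P, IsSkorohod D T
      (fun t => x + I t ω + ∫ s in (0:ℝ)..t, b (X s ω))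
      (fun t => X t ω) (fun t => Φ t ω)

/-- `(ξ, Φ)` is a solution of the reflecting ODE `dξ = σ(ξ) dw + b(ξ) dt + dΦ` on `D̄`
driven by the (bounded variation) path `w`, with initial condition `x`. -/
def IsRODE {n d : ℕ} (D : Set (E d)) (σ : E d → (E n →L[ℝ] E d)) (b : E d → E d)
    (T : ℝ) (x : E d) (w : ℝ → E n) (ξ Φ : ℝ → E d) : Prop :=
  ∃ I : ℝ → E d,
    (∀ t ∈ Icc 0 T, IsRSI (fun s => σ (ξ s)) w 0 t (I t)) ∧
    IsSkorohod D T (fun t => x + I t + ∫ s in (0:ℝ)..t, b (ξ s)) ξ Φ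

/-- The piecewise linear interpolation `B^N` of `B` at the points `t_k = kT/N`. -/
def plin {n : ℕ} {Ω : Type*} (T : ℝ) (N : ℕ) (B : ℝ → Ω → E n) (t : ℝ) (ω : Ω) : E n :=
  let k : ℕ := max 1 ⌈t * N / T⌉₊
  B (((k : ℝ) - 1) * T / N) ω +
    ((t - ((k : ℝ) - 1) * T / N) * N / T) •
      (B ((k : ℝ) * T / N) ω - B (((k : ℝ) - 1) * T / N) ω)

/-- `(X, Φ)` is the Wong–Zakai approximation of level `N`: for every `ω` it solves the
reflecting ODE driven by the piecewise linear interpolation `B^N`. -/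
def IsWZ {n d : ℕ} {Ω : Type*} (B : ℝ → Ω → E n) (D : Set (E d))
    (σ : E d → (E n →L[ℝ] E d)) (b : E d → E d) (T : ℝ) (x : E d) (N : ℕ)
    (X Φ : ℝ → Ω → E d) : Prop :=
  ∀ ω, IsRODE D σ b T x (fun t => plin T N B t ω) (fun t => X t ω) (fun t => Φ t ω)

/-- `π_N(t) = max {t_k = kT/N : t_k ≤ t}`. -/
def piN (T : ℝ) (N : ℕ) (t : ℝ) : ℝ := (⌊t * N / T⌋₊ : ℝ) * T / N

/-- The driving path `Y^N_E(t) = x + ∫_0^t σ(X_E(π_N(s))) dB(s) + ∫_0^t b(X_E(π_N(s))) ds`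
of the Euler–Peano scheme (the stochastic integral of the piecewise constant integrand is
the explicit finite sum). -/
def epDrive {n d : ℕ} {Ω : Type*} (B : ℝ → Ω → E n)
    (σ : E d → (E n →L[ℝ] E d)) (b : E d → E d) (T : ℝ) (x : E d) (N : ℕ)
    (XE : ℝ → Ω → E d) (t : ℝ) (ω : Ω) : E d :=
  x + (∑ k ∈ Finset.range N, (σ (XE ((k : ℝ) * T / N) ω))
        (B (min (((k : ℝ) + 1) * T / N) t) ω - B (min ((k : ℝ) * T / N) t) ω))
    + ∫ s in (0:ℝ)..t, b (XE (piN T N s) ω)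

/-- `(XE, ΦE)` is the Euler–Peano approximation of level `N` of the reflecting
SDE `(σ, b)` on `D̄` started at `x`. -/
def IsEulerPeano {n d : ℕ} {Ω : Type*} {mΩ : MeasurableSpace Ω} (P : Measure Ω)
    (F : Filtration ℝ mΩ) (B : ℝ → Ω → E n) (D : Set (E d))
    (σ : E d → (E n →L[ℝ] E d)) (b : E d → E d) (T : ℝ) (x : E d) (N : ℕ)
    (XE ΦE : ℝ → Ω → E d) : Prop :=
  Adapted F XE ∧ Adapted F ΦE ∧
    ∀ᵐ ω ∂P, IsSkorohod D T (fun t => epDrive B σ b T x N XE t ω)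
      (fun t => XE t ω) (fun t => ΦE t ω)

/-- The Wong–Zakai drift correction `½ tr (Dσ)(σ)`. -/
def driftCorr {n d : ℕ} (σ : E d → (E n →L[ℝ] E d)) (y : E d) : E d :=
  (1 / 2 : ℝ) • ∑ i : Fin n,
    (fderiv ℝ σ y ((σ y) (EuclideanSpace.single i 1))) (EuclideanSpace.single i 1)

/-- `M` is a continuous `ℱ_t`-local martingale (via a localizing sequence of
stopping times). -/
def IsLocalMartingale {Ω : Type*} {mΩ : MeasurableSpace Ω} (P : Measure Ω)
    (F : Filtration ℝ mΩ) (M : ℝ → Ω → ℝ) : Prop :=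
  ∃ τ : ℕ → Ω → ℝ, (∀ j, IsStoppingTime F (fun ω => ((τ j ω : ℝ) : WithTop ℝ))) ∧
    (∀ ω, Tendsto (fun j => τ j ω) atTop atTop) ∧
    ∀ j, Martingale (fun t ω => M (min (τ j ω) t) ω) F P

/-- `X` is a continuous `ℱ_t`-semimartingale on `[0,T]`. -/
def IsContSemimartingale {Ω : Type*} {mΩ : MeasurableSpace Ω} (P : Measure Ω)
    (F : Filtration ℝ mΩ) (T : ℝ) (X : ℝ → Ω → ℝ) : Prop :=
  Adapted F X ∧ (∀ ω, Continuous fun t => X t ω) ∧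
  ∃ M A : ℝ → Ω → ℝ, IsLocalMartingale P F M ∧ Adapted F A ∧
    (∀ ω, Continuous fun t => M t ω) ∧ (∀ ω, Continuous fun t => A t ω) ∧
    (∀ ω, BoundedVariationOn (fun t => A t ω) (Icc 0 T)) ∧
    ∀ t ω, X t ω = M t ω + A t ω

/-- The class `𝕊`: finite sums of products `Y(t)A(t)` of continuous semimartingales with
continuous bounded variation processes, with all relevant quantities in every `L^p`. -/
def MemS {Ω : Type*} {mΩ : MeasurableSpace Ω} (P : Measure Ω)
    (F : Filtration ℝ mΩ) (T : ℝ) (U : ℝ → Ω → ℝ) : Prop :=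
  ∃ (m : ℕ) (Y A : Fin m → ℝ → Ω → ℝ),
    (∀ i, IsContSemimartingale P F T (Y i)) ∧
    (∀ i ω, Continuous fun t => A i t ω) ∧
    (∀ i ω, BoundedVariationOn (fun t => A i t ω) (Icc 0 T)) ∧
    (∀ i, ∀ p : ℝ, 1 ≤ p →
      MemLp (fun ω => (⨆ t : Icc (0:ℝ) T, |Y i t ω|) + tv (fun t => A i t ω) 0 T)
        (ENNReal.ofReal p) P) ∧
    ∀ t ω, U t ω = ∑ i, Y i t ω * A i t ω

end RSDE


/-! Cut `[s, t]` into pieces on which the reflection measure `μ = d‖φ‖` has mass at most `r₀ / 2`.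
On such a piece `[u, v]` let `ρ` be the largest displacement `‖ξ r - ξ u‖`. Expanding
`‖ξ r - ξ u‖²` along fine partitions, the driving path contributes at most `2 ρ ‖w‖_{[u,v]}`,
while the exterior sphere condition `2 r₀ ⟪ξ q - ξ u, n q⟫ ≤ ‖ξ q - ξ u‖²` bounds the
contribution of the reflection by `ρ² μ (u, v] / r₀ ≤ ρ² / 2`. Hence `ρ² ≤ 2 ρ ‖w‖ + ρ² / 2`,
so `‖ξ v - ξ u‖ ≤ ρ ≤ 4 ‖w‖_{[u,v]}`, and summing over the pieces gives
`‖ξ‖_{[s,t]} ≤ 4 ‖w‖_{[s,t]} ≤ 2 (√2 + 1) ‖w‖_{[s,t]}`. -/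

theorem exists_partition_Icc {u v δ : ℝ} (huv : u ≤ v) (hδ : 0 < δ) :
    ∃ (n : ℕ) (a : ℕ → ℝ), Monotone a ∧ a 0 = u ∧ a n = v ∧ (∀ j, a j ∈ Icc u v) ∧
      ∀ j, a (j + 1) - a j < δ := by
  refine ⟨⌈(v - u) / (δ / 2)⌉₊, fun j => min v (u + j * (δ / 2)), ?_, by simp [huv], ?_,
    fun j => ⟨le_min huv (le_add_of_nonneg_right (by positivity)), min_le_left _ _⟩, fun j => ?_⟩
  · exact fun i j hij => min_le_min_left _ (by gcongr)
  · refine min_eq_left ?_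
    have := Nat.le_ceil ((v - u) / (δ / 2))
    rw [div_le_iff₀ (by positivity)] at this
    linarith
  · have : min v (u + (j + 1 : ℕ) * (δ / 2)) ≤ min v (u + j * (δ / 2)) + δ / 2 := by
      push_cast
      rw [← min_add_add_right]
      exact min_le_min (by linarith) (by linarith)
    linarith

section Variation

variable {α : Type*} [LinearOrder α] {E F : Type*} [PseudoEMetricSpace E] [PseudoEMetricSpace F]

theorem eVariationOn_Icc_le_mul_of_edist_le {f : α → E} {g : α → F} {a b : α} {C : ℝ≥0∞}
    (h : ∀ p q, a ≤ p → p ≤ q → q ≤ b → edist (g q) (g p) ≤ C * eVariationOn f (Icc p q)) :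
    eVariationOn g (Icc a b) ≤ C * eVariationOn f (Icc a b) := by
  refine iSup_le fun ⟨n, x, hx, hxab⟩ => ?_
  calc ∑ i ∈ Finset.range n, edist (g (x (i + 1))) (g (x i))
      ≤ ∑ i ∈ Finset.range n, C * eVariationOn f (Icc (x i) (x (i + 1))) :=
        Finset.sum_le_sum fun i _ =>
          h _ _ (hxab i).1 (hx i.le_succ) (hxab (i + 1)).2
    _ = C * eVariationOn f (Icc (x 0) (x n)) := by
        rw [← Finset.mul_sum, eVariationOn.sum' f hx]
    _ ≤ C * eVariationOn f (Icc a b) := by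
        gcongr
        exact eVariationOn.mono f (Icc_subset_Icc (hxab 0).1 (hxab n).2)

theorem eVariationOn_Icc_le_mul_of_edist_le_of_sub_lt {f : ℝ → E} {g : ℝ → F} {a b δ : ℝ}
    {C : ℝ≥0∞} (hab : a ≤ b) (hδ : 0 < δ)
    (h : ∀ p q, a ≤ p → p ≤ q → q ≤ b → q - p < δ →
      edist (g q) (g p) ≤ C * eVariationOn f (Icc p q)) :
    eVariationOn g (Icc a b) ≤ C * eVariationOn f (Icc a b) := by
  obtain ⟨n, c, hc, hc0, hcn, hcab, hcδ⟩ := exists_partition_Icc hab hδ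
  rw [← hc0, ← hcn, ← eVariationOn.sum' g hc, ← eVariationOn.sum' f hc, Finset.mul_sum]
  refine Finset.sum_le_sum fun j _ => eVariationOn_Icc_le_mul_of_edist_le fun p q hp hpq hq => ?_
  exact h p q ((hcab j).1.trans hp) hpq (hq.trans (hcab (j + 1)).2)
    (by linarith [hcδ j])

theorem BoundedVariationOn.continuousOn_variationOnFromTo [TopologicalSpace α] [OrderTopology α]
    {f : α → E} {s : Set α} (hf : BoundedVariationOn f s) (hc : ContinuousOn f s) {a : α}
    (ha : a ∈ s) : ContinuousOn (variationOnFromTo f s a) s := by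
  intro x hx
  have hsplit : ∀ y ∈ s, variationOnFromTo f s a y =
      variationOnFromTo f s a x + variationOnFromTo f s x y := fun y hy =>
    (variationOnFromTo.add hf.locallyBoundedVariationOn ha hx hy).symm
  refine ContinuousWithinAt.congr (f := fun y => variationOnFromTo f s a x +
    variationOnFromTo f s x y) ?_ hsplit (hsplit x hx)
  refine continuousWithinAt_const.add ?_
  rw [ContinuousWithinAt, variationOnFromTo.self]
  have hleft := (ENNReal.tendsto_toReal ENNReal.zero_ne_top).comp
    (hf.tendsto_eVariationOn_Icc_zero_left ((hc x hx).mono inter_subset_left))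
  have hright := (ENNReal.tendsto_toReal ENNReal.zero_ne_top).comp
    (hf.tendsto_eVariationOn_Icc_zero_right x ((hc x hx).mono inter_subset_left))
  refine squeeze_zero_norm (fun y => ?_) (by simpa using hleft.add hright)
  rcases le_total x y with hxy | hyx
  · rw [variationOnFromTo.eq_of_le _ _ hxy, Real.norm_of_nonneg ENNReal.toReal_nonneg]
    exact le_add_of_nonneg_left ENNReal.toReal_nonneg
  · rw [variationOnFromTo.eq_of_ge _ _ hyx, norm_neg, Real.norm_of_nonneg ENNReal.toReal_nonneg]
    exact le_add_of_nonneg_right ENNReal.toReal_nonneg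

theorem BoundedVariationOn.exists_pos_eVariationOn_Icc_le {f : ℝ → E} {a b : ℝ}
    (hf : BoundedVariationOn f (Icc a b)) (hc : ContinuousOn f (Icc a b)) {ε : ℝ} (hε : 0 < ε) :
    ∃ δ > 0, ∀ p q, a ≤ p → p ≤ q → q ≤ b → q - p < δ →
      eVariationOn f (Icc p q) ≤ ENNReal.ofReal ε := by
  rcases lt_or_ge b a with hba | hab
  · exact ⟨1, one_pos, fun p q hp hpq hq _ => absurd (hp.trans (hpq.trans hq)) (not_le.2 hba)⟩
  have hV := isCompact_Icc.uniformContinuousOn_of_continuous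
    (hf.continuousOn_variationOnFromTo hc (left_mem_Icc.2 hab))
  obtain ⟨δ, hδ, hδV⟩ := Metric.uniformContinuousOn_iff.1 hV ε hε
  refine ⟨δ, hδ, fun p q hp hpq hq hpqδ => ?_⟩
  have hp' : p ∈ Icc a b := ⟨hp, hpq.trans hq⟩
  have hq' : q ∈ Icc a b := ⟨hp.trans hpq, hq⟩
  have hadd := variationOnFromTo.add hf.locallyBoundedVariationOn (left_mem_Icc.2 hab) hp' hq'
  have hdist := hδV q hq' p hp' (by rw [Real.dist_eq, abs_of_nonneg (by linarith)]; linarith)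
  rw [variationOnFromTo.eq_of_le _ _ hpq, Icc_inter_Icc, max_eq_right hp, min_eq_right hq] at hadd
  rw [← ENNReal.ofReal_toReal (hf.mono (Icc_subset_Icc hp hq))]
  refine ENNReal.ofReal_le_ofReal ?_
  rw [Real.dist_eq] at hdist
  linarith [le_abs_self (variationOnFromTo f (Icc a b) a q - variationOnFromTo f (Icc a b) a p)]

end Variation

section Measure

variable {μ : Measure ℝ}

theorem sum_measure_Ioc {a : ℕ → ℝ} (ha : Monotone a) (n : ℕ) :
    ∑ j ∈ Finset.range n, μ (Ioc (a j) (a (j + 1))) = μ (Ioc (a 0) (a n)) := by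
  induction n with
  | zero => simp
  | succ n ih =>
    rw [Finset.sum_range_succ, ih,
      ← measure_union (Ioc_disjoint_Ioc_of_le le_rfl) measurableSet_Ioc,
      Ioc_union_Ioc_eq_Ioc (ha n.zero_le) (ha n.le_succ)]

theorem aestronglyMeasurable_restrict_Icc_of_measure_Ioc_eq_zero {F : Type*} [TopologicalSpace F]
    [TopologicalSpace.PseudoMetrizableSpace F] {f : ℝ → F} {a b : ℝ}
    (h : ∀ r ∈ Icc a b, ¬AEStronglyMeasurable f (μ.restrict (Icc a r)) → μ (Ioc r b) = 0) :
    AEStronglyMeasurable f (μ.restrict (Icc a b)) := by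
  rcases lt_or_ge b a with hba | hab
  · rw [Icc_eq_empty_of_lt hba, Measure.restrict_empty]
    exact aestronglyMeasurable_zero_measure f
  have hsingleton : ∀ x, AEStronglyMeasurable f (μ.restrict {x}) := fun x => by
    rw [Measure.restrict_singleton]
    exact aestronglyMeasurable_dirac.smul_measure _
  set S := {r | r ∈ Icc a b ∧ AEStronglyMeasurable f (μ.restrict (Icc a r))}
  have haS : a ∈ S := ⟨left_mem_Icc.2 hab, by simpa using hsingleton a⟩
  have hSb : BddAbove S := ⟨b, fun r hr => hr.1.2⟩
  set t₀ := sSup S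
  have ht₀ : t₀ ∈ Icc a b := ⟨le_csSup hSb haS, csSup_le ⟨a, haS⟩ fun r hr => hr.1.2⟩
  -- `Icc a t₀` is covered by countably many good intervals and the point `t₀`
  have hmeas : AEStronglyMeasurable f (μ.restrict (Icc a t₀)) := by
    rcases ht₀.1.eq_or_lt with hat | hat
    · simpa [← hat] using hsingleton a
    obtain ⟨u, -, hu, hut⟩ := exists_seq_strictMono_tendsto' hat
    have hcover : Icc a t₀ ⊆ (⋃ n, Icc a (u n)) ∪ {t₀} := fun z hz => by
      rcases hz.2.eq_or_lt with rfl | hzt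
      · exact Or.inr rfl
      obtain ⟨n, hn⟩ := (hut.eventually_const_lt hzt).exists
      exact Or.inl (mem_iUnion.2 ⟨n, hz.1, hn.le⟩)
    refine (aestronglyMeasurable_union_iff.2 ⟨aestronglyMeasurable_iUnion_iff.2 fun n => ?_,
      hsingleton t₀⟩).mono_measure (Measure.restrict_mono hcover le_rfl)
    obtain ⟨r, hrS, hr⟩ := exists_lt_of_lt_csSup ⟨a, haS⟩ (hu n).2
    exact hrS.2.mono_measure (Measure.restrict_mono (Icc_subset_Icc le_rfl hr.le) le_rfl)
  rcases ht₀.2.eq_or_lt with htb | htb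
  · rwa [← htb]
  -- beyond `t₀` every `Icc a r` is bad, so `μ` does not charge `Ioc t₀ b`
  obtain ⟨u, -, hu, hut⟩ := exists_seq_strictAnti_tendsto' htb
  have hnull : μ (Ioc t₀ b) = 0 := by
    refine measure_mono_null (fun z hz => ?_) (measure_iUnion_null fun n =>
      h (u n) ⟨ht₀.1.trans (hu n).1.le, (hu n).2.le⟩ fun hm =>
        (not_le.2 (hu n).1) (le_csSup hSb ⟨⟨ht₀.1.trans (hu n).1.le, (hu n).2.le⟩, hm⟩))
    obtain ⟨n, hn⟩ := (hut.eventually_lt_const hz.1).exists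
    exact mem_iUnion.2 ⟨n, hn, hz.2⟩
  rw [← Icc_union_Ioc_eq_Icc ht₀.1 ht₀.2, aestronglyMeasurable_union_iff,
    Measure.restrict_eq_zero.2 hnull]
  exact ⟨hmeas, aestronglyMeasurable_zero_measure f⟩

theorem measure_Ioc_eq_eVariationOn {E : Type*} [PseudoEMetricSpace E] {T : ℝ} {φ : ℝ → E}
    (hφ : BoundedVariationOn φ (Icc 0 T))
    (hμ : ∀ t ∈ Icc 0 T, μ (Icc 0 t) = eVariationOn φ (Icc 0 t)) {x y : ℝ} (hx : 0 ≤ x)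
    (hxy : x ≤ y) (hy : y ≤ T) : μ (Ioc x y) = eVariationOn φ (Icc x y) := by
  have hμadd : μ (Icc 0 x) + μ (Ioc x y) = μ (Icc 0 y) := by
    rw [← measure_union (disjoint_left.2 fun z hz hz' => hz'.1.not_ge hz.2) measurableSet_Ioc,
      Icc_union_Ioc_eq_Icc hx hxy]
  have hVadd : eVariationOn φ (Icc 0 x) + eVariationOn φ (Icc x y) = eVariationOn φ (Icc 0 y) := by
    simpa using eVariationOn.Icc_add_Icc φ (s := univ) hx hxy (mem_univ x)
  rw [hμ x ⟨hx, hxy.trans hy⟩, hμ y ⟨hx.trans hxy, hy⟩, ← hVadd] at hμadd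
  exact (ENNReal.add_right_inj (hφ.mono (Icc_subset_Icc le_rfl (hxy.trans hy)))).1 hμadd

end Measure

theorem inner_setIntegral_le {α F : Type*} [MeasurableSpace α] [NormedAddCommGroup F]
    [InnerProductSpace ℝ F] [CompleteSpace F] {μ : Measure α} {s : Set α} {f : α → F} {c : F}
    {K : ℝ} (hf : IntegrableOn f s μ) (hs : μ s ≠ ∞) (hK : ∀ᵐ q ∂μ.restrict s, ⟪c, f q⟫ ≤ K) :
    ⟪c, ∫ q in s, f q ∂μ⟫ ≤ K * μ.real s := by
  have : IsFiniteMeasure (μ.restrict s) := isFiniteMeasure_restrict.2 hs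
  rw [← integral_inner hf, mul_comm, ← smul_eq_mul, ← setIntegral_const]
  exact integral_mono_ae (hf.const_inner c) (integrable_const K) hK

theorem sq_norm_sub_sub_sq_norm_sub_le {F : Type*} [NormedAddCommGroup F] [InnerProductSpace ℝ F]
    {b x y a p : F} {ρ η K m : ℝ} (hxy : y - x = a + p) (hx : ‖x - b‖ ≤ ρ) (hy : ‖y - x‖ ≤ η)
    (hp : ‖p‖ ≤ m) (hpK : ⟪x - b, p⟫ ≤ K * m) :
    ‖y - b‖ ^ 2 - ‖x - b‖ ^ 2 ≤ (2 * ρ + η) * ‖a‖ + (2 * K + η) * m := by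
  have hsq : ‖y - b‖ ^ 2 = ‖x - b‖ ^ 2 + 2 * ⟪x - b, y - x⟫ + ‖y - x‖ ^ 2 := by
    rw [← norm_add_sq_real, sub_add_sub_cancel']
  have hinner : ⟪x - b, y - x⟫ = ⟪x - b, a⟫ + ⟪x - b, p⟫ := by rw [hxy, inner_add_right]
  have ha : ⟪x - b, a⟫ ≤ ρ * ‖a‖ :=
    (real_inner_le_norm _ _).trans (mul_le_mul_of_nonneg_right hx (norm_nonneg _))
  have hyx : ‖y - x‖ ^ 2 ≤ η * (‖a‖ + m) := by
    rw [sq]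
    refine mul_le_mul hy ?_ (norm_nonneg _) ((norm_nonneg _).trans hy)
    exact hxy ▸ (norm_add_le a p).trans (add_le_add_right hp _)
  nlinarith [norm_nonneg a]

namespace RSDE

variable {d : ℕ} {D : Set (E d)} {r₀ : ℝ}

theorem norm_eq_one_of_mem_normals {x v : E d} (hv : v ∈ normals D x) : ‖v‖ = 1 := by
  obtain ⟨r, -, hv⟩ := mem_iUnion₂.1 hv
  exact hv.1

theorem CondA.two_mul_inner_le (hA : CondA D r₀) {x y v : E d} (hx : x ∈ frontier D)
    (hv : v ∈ normals D x) (hy : y ∈ closure D) : 2 * r₀ * ⟪x - y, v⟫ ≤ ‖x - y‖ ^ 2 := by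
  obtain ⟨hv1, hball⟩ : v ∈ normalsR D x r₀ := (hA.2 x hx).1 ▸ hv
  have hy' : y ∉ Metric.ball (x - r₀ • v) r₀ := fun hyb =>
    ((disjoint_iff_inter_eq_empty.2 hball).closure_right Metric.isOpen_ball).notMem_of_mem_left
      hyb hy
  rw [Metric.mem_ball, not_lt, dist_eq_norm, sub_sub_eq_add_sub, add_sub_right_comm] at hy'
  have := pow_le_pow_left₀ hA.1.le hy' 2
  rw [norm_add_sq_real, real_inner_smul_right, norm_smul, hv1, Real.norm_of_nonneg hA.1.le,
    ← neg_sub x y, inner_neg_left, norm_neg] at this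
  nlinarith

/-- The Skorohod relation on `[u, v]` in increment form: `ξ` moves like `w` plus the integral of
the inward normal field `nv` against the reflection measure `μ`, which is carried by the times
spent on `∂D`. -/
structure IsReflectedOn (D : Set (E d)) (w ξ : ℝ → E d) (μ : Measure ℝ) (nv : ℝ → E d)
    (u v : ℝ) : Prop where
  continuousOn : ContinuousOn ξ (Icc u v)
  mem_closure : ∀ t ∈ Icc u v, ξ t ∈ closure D
  integrableOn : IntegrableOn nv (Ioc u v) μ
  sub_eq : ∀ x y, u ≤ x → x ≤ y → y ≤ v → ξ y - ξ x = w y - w x + ∫ q in Ioc x y, nv q ∂μ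
  normal : ∀ᵐ q ∂μ.restrict (Ioc u v), ξ q ∈ frontier D ∧ nv q ∈ normals D (ξ q)

namespace IsReflectedOn

variable {w ξ nv : ℝ → E d} {μ : Measure ℝ} {u v : ℝ}

theorem mono (h : IsReflectedOn D w ξ μ nv u v) {u' v' : ℝ} (hu : u ≤ u') (hv : v' ≤ v) :
    IsReflectedOn D w ξ μ nv u' v' where
  continuousOn := h.continuousOn.mono (Icc_subset_Icc hu hv)
  mem_closure t ht := h.mem_closure t (Icc_subset_Icc hu hv ht)
  integrableOn := h.integrableOn.mono_set (Ioc_subset_Ioc hu hv)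
  sub_eq x y hx hxy hy := h.sub_eq x y (hu.trans hx) hxy (hy.trans hv)
  normal := ae_restrict_of_ae_restrict_of_subset (Ioc_subset_Ioc hu hv) h.normal

variable [IsFiniteMeasure μ]

theorem sq_norm_sub_sub_sq_norm_sub_le (hA : CondA D r₀) (h : IsReflectedOn D w ξ μ nv u v)
    {ρ η : ℝ} (hρ : ∀ r ∈ Icc u v, ‖ξ r - ξ u‖ ≤ ρ) {x y : ℝ} (hux : u ≤ x) (hxy : x ≤ y)
    (hyv : y ≤ v) (hosc : ∀ q ∈ Icc x y, ‖ξ q - ξ x‖ ≤ η) :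
    ‖ξ y - ξ u‖ ^ 2 - ‖ξ x - ξ u‖ ^ 2 ≤
      (2 * ρ + η) * ‖w y - w x‖ + (ρ ^ 2 / r₀ + 3 * η) * μ.real (Ioc x y) := by
  have hsub : Ioc x y ⊆ Ioc u v := Ioc_subset_Ioc hux hyv
  have hnormal : ∀ᵐ q ∂μ.restrict (Ioc x y),
      q ∈ Ioc x y ∧ ξ q ∈ frontier D ∧ nv q ∈ normals D (ξ q) := by
    filter_upwards [ae_restrict_mem measurableSet_Ioc,
      ae_restrict_of_ae_restrict_of_subset hsub h.normal] with q hq hn using ⟨hq, hn⟩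
  have hnorm : ‖∫ q in Ioc x y, nv q ∂μ‖ ≤ 1 * μ.real (Ioc x y) :=
    norm_setIntegral_le_of_norm_le_const_ae (measure_lt_top _ _)
      (hnormal.mono fun q hq => (norm_eq_one_of_mem_normals hq.2.2).le)
  -- by the exterior sphere condition, the reflection hardly pushes `ξ` away from `ξ u`
  have hinner : ⟪ξ x - ξ u, ∫ q in Ioc x y, nv q ∂μ⟫ ≤
      (η + ρ ^ 2 / (2 * r₀)) * μ.real (Ioc x y) := by
    refine inner_setIntegral_le (h.integrableOn.mono_set hsub) (measure_ne_top _ _)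
      (hnormal.mono fun q ⟨hq, hqD, hqn⟩ => ?_)
    have h1 : ⟪ξ x - ξ q, nv q⟫ ≤ η := by
      refine (real_inner_le_norm _ _).trans ?_
      rw [norm_eq_one_of_mem_normals hqn, mul_one, norm_sub_rev]
      exact hosc q ⟨hq.1.le, hq.2⟩
    have h2 : 2 * r₀ * ⟪ξ q - ξ u, nv q⟫ ≤ ρ ^ 2 :=
      (hA.two_mul_inner_le hqD hqn (h.mem_closure u ⟨le_rfl, hux.trans (hxy.trans hyv)⟩)).trans
        (pow_le_pow_left₀ (norm_nonneg _) (hρ q ⟨hux.trans hq.1.le, hq.2.trans hyv⟩) 2)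
    have h2' : ⟪ξ q - ξ u, nv q⟫ ≤ ρ ^ 2 / (2 * r₀) := by
      rw [le_div_iff₀ (by linarith [hA.1])]
      linarith
    rw [← sub_add_sub_cancel (ξ x) (ξ q) (ξ u), inner_add_left]
    linarith
  refine (_root_.sq_norm_sub_sub_sq_norm_sub_le (h.sub_eq x y hux hxy hyv)
    (hρ x ⟨hux, hxy.trans hyv⟩) (hosc y ⟨hxy, le_rfl⟩) (by simpa using hnorm) hinner).trans_eq ?_
  field_simp [hA.1.ne']
  ring

theorem sq_norm_sub_le_add (hA : CondA D r₀) (h : IsReflectedOn D w ξ μ nv u v)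
    (hw : BoundedVariationOn w (Icc u v)) {ρ : ℝ} (hρ : ∀ r ∈ Icc u v, ‖ξ r - ξ u‖ ≤ ρ) {r : ℝ}
    (hr : r ∈ Icc u v) {η : ℝ} (hη : 0 < η) :
    ‖ξ r - ξ u‖ ^ 2 ≤ (2 * ρ + η) * (eVariationOn w (Icc u v)).toReal +
      (ρ ^ 2 / r₀ + 3 * η) * μ.real (Ioc u v) := by
  obtain ⟨δ, hδ, hξδ⟩ := Metric.uniformContinuousOn_iff.1
    (isCompact_Icc.uniformContinuousOn_of_continuous h.continuousOn) η hη
  obtain ⟨n, a, ha, ha0, han, haI, haδ⟩ := exists_partition_Icc hr.1 hδ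
  have hauv : ∀ j, a j ∈ Icc u v := fun j => ⟨(haI j).1, (haI j).2.trans hr.2⟩
  have hρ0 : 0 ≤ ρ := (norm_nonneg _).trans (hρ u ⟨le_rfl, hr.1.trans hr.2⟩)
  have hstep : ∀ j ∈ Finset.range n, ‖ξ (a (j + 1)) - ξ u‖ ^ 2 - ‖ξ (a j) - ξ u‖ ^ 2 ≤
      (2 * ρ + η) * ‖w (a (j + 1)) - w (a j)‖ +
        (ρ ^ 2 / r₀ + 3 * η) * μ.real (Ioc (a j) (a (j + 1))) := fun j _ => by
    refine h.sq_norm_sub_sub_sq_norm_sub_le hA hρ (hauv j).1 (ha j.le_succ) (hauv (j + 1)).2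
      fun q hq => ?_
    rw [← dist_eq_norm]
    refine (hξδ q ⟨(hauv j).1.trans hq.1, hq.2.trans (hauv (j + 1)).2⟩ (a j) (hauv j) ?_).le
    rw [Real.dist_eq, abs_of_nonneg (sub_nonneg.2 hq.1)]
    linarith [haδ j, hq.2]
  have hW : ∑ j ∈ Finset.range n, ‖w (a (j + 1)) - w (a j)‖ ≤
      (eVariationOn w (Icc u v)).toReal := by
    simp_rw [← dist_eq_norm, dist_edist]
    rw [← ENNReal.toReal_sum fun j _ => edist_ne_top _ _]
    exact ENNReal.toReal_mono hw (eVariationOn.sum_le ha hauv)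
  have hΦ : ∑ j ∈ Finset.range n, μ.real (Ioc (a j) (a (j + 1))) ≤ μ.real (Ioc u v) := by
    simp_rw [measureReal_def]
    rw [← ENNReal.toReal_sum fun j _ => measure_ne_top _ _, sum_measure_Ioc ha, ha0, han]
    exact ENNReal.toReal_mono (measure_ne_top _ _) (measure_mono (Ioc_subset_Ioc le_rfl hr.2))
  calc ‖ξ r - ξ u‖ ^ 2
      = ∑ j ∈ Finset.range n, (‖ξ (a (j + 1)) - ξ u‖ ^ 2 - ‖ξ (a j) - ξ u‖ ^ 2) := by
        rw [Finset.sum_range_sub (fun j => ‖ξ (a j) - ξ u‖ ^ 2), han, ha0, sub_self, norm_zero]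
        ring
    _ ≤ ∑ j ∈ Finset.range n, ((2 * ρ + η) * ‖w (a (j + 1)) - w (a j)‖ +
          (ρ ^ 2 / r₀ + 3 * η) * μ.real (Ioc (a j) (a (j + 1)))) := Finset.sum_le_sum hstep
    _ ≤ _ := by
        rw [Finset.sum_add_distrib, ← Finset.mul_sum, ← Finset.mul_sum]
        have : 0 ≤ ρ ^ 2 / r₀ := div_nonneg (sq_nonneg ρ) hA.1.le
        gcongr

theorem sq_norm_sub_le (hA : CondA D r₀) (h : IsReflectedOn D w ξ μ nv u v)
    (hw : BoundedVariationOn w (Icc u v)) {ρ : ℝ} (hρ : ∀ r ∈ Icc u v, ‖ξ r - ξ u‖ ≤ ρ) {r : ℝ}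
    (hr : r ∈ Icc u v) :
    ‖ξ r - ξ u‖ ^ 2 ≤
      2 * ρ * (eVariationOn w (Icc u v)).toReal + ρ ^ 2 / r₀ * μ.real (Ioc u v) := by
  set W := (eVariationOn w (Icc u v)).toReal
  set Φ := μ.real (Ioc u v)
  have hcont : Continuous fun η : ℝ => (2 * ρ + η) * W + (ρ ^ 2 / r₀ + 3 * η) * Φ := by fun_prop
  have hlim := tendsto_nhdsWithin_of_tendsto_nhds (s := Ioi 0) (hcont.tendsto 0)
  refine le_of_le_of_eq (ge_of_tendsto hlim (eventually_nhdsWithin_of_forall fun η hη =>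
    h.sq_norm_sub_le_add hA hw hρ hr hη)) ?_
  ring

theorem edist_le_four_mul (hA : CondA D r₀) (h : IsReflectedOn D w ξ μ nv u v) (huv : u ≤ v)
    (hsmall : μ (Ioc u v) ≤ ENNReal.ofReal (r₀ / 2)) :
    edist (ξ v) (ξ u) ≤ 4 * eVariationOn w (Icc u v) := by
  rcases eq_top_or_lt_top (eVariationOn w (Icc u v)) with hw | hw
  · simp [hw]
  obtain ⟨r, hr, hmax⟩ := isCompact_Icc.exists_isMaxOn (nonempty_Icc.2 huv)
    (h.continuousOn.sub continuousOn_const).norm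
  set W := (eVariationOn w (Icc u v)).toReal
  set ρ := ‖ξ r - ξ u‖
  have hρ : ∀ t ∈ Icc u v, ‖ξ t - ξ u‖ ≤ ρ := fun t ht => hmax ht
  have hkey := h.sq_norm_sub_le hA hw.ne hρ hr
  have hΦ : ρ ^ 2 / r₀ * μ.real (Ioc u v) ≤ ρ ^ 2 / 2 := by
    calc ρ ^ 2 / r₀ * μ.real (Ioc u v) ≤ ρ ^ 2 / r₀ * (r₀ / 2) :=
          mul_le_mul_of_nonneg_left (ENNReal.toReal_le_of_le_ofReal (by linarith [hA.1]) hsmall)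
            (div_nonneg (sq_nonneg ρ) hA.1.le)
      _ = ρ ^ 2 / 2 := by field_simp [hA.1.ne']
  have hρW : ρ ≤ 4 * W := by nlinarith [norm_nonneg (ξ r - ξ u), (ENNReal.toReal_nonneg : 0 ≤ W)]
  calc edist (ξ v) (ξ u) = ENNReal.ofReal ‖ξ v - ξ u‖ := by rw [edist_dist, dist_eq_norm]
    _ ≤ ENNReal.ofReal (4 * W) := ENNReal.ofReal_le_ofReal ((hρ v ⟨huv, le_rfl⟩).trans hρW)
    _ = 4 * eVariationOn w (Icc u v) := by
        rw [ENNReal.ofReal_mul (by norm_num), ENNReal.ofReal_toReal hw.ne]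
        norm_num

end IsReflectedOn

namespace IsSkorohod

variable {T : ℝ} {w ξ φ : ℝ → E d}

theorem exists_isReflectedOn (hsk : IsSkorohod D T w ξ φ) :
    ∃ (μ : Measure ℝ) (nv : ℝ → E d), IsFiniteMeasure μ ∧ IsReflectedOn D w ξ μ nv 0 T ∧
      ∀ x y, 0 ≤ x → x ≤ y → y ≤ T → μ (Ioc x y) = eVariationOn φ (Icc x y) := by
  obtain ⟨μ, nv, hμ, hμV, hφ, hnormal⟩ := hsk.reflection
  have hμIoc : ∀ x y, 0 ≤ x → x ≤ y → y ≤ T → μ (Ioc x y) = eVariationOn φ (Icc x y) :=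
    fun _ _ => measure_Ioc_eq_eVariationOn hsk.bv_phi hμV
  -- `nv` is not assumed measurable: past the first time its integral is junk, `φ = 0`,
  -- so the variation measure `μ` vanishes there
  have hmeas : AEStronglyMeasurable nv (μ.restrict (Icc 0 T)) :=
    aestronglyMeasurable_restrict_Icc_of_measure_Ioc_eq_zero fun r hr hnot => by
      rw [hμIoc r T hr.1 hr.2 le_rfl]
      refine eVariationOn.constant_on (subsingleton_singleton.anti (t := {(0 : E d)}) ?_)
      rintro _ ⟨r', hr', rfl⟩
      rw [mem_singleton_iff, hφ r' ⟨hr.1.trans hr'.1, hr'.2⟩]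
      exact integral_undef fun hint => hnot (hint.1.mono_measure
        (Measure.restrict_mono (Icc_subset_Icc le_rfl hr'.1) le_rfl))
  have hint : IntegrableOn nv (Icc 0 T) μ := Integrable.of_bound hmeas 1
    (ae_restrict_of_ae (hnormal.mono fun q hq => (norm_eq_one_of_mem_normals hq.2.2).le))
  refine ⟨μ, nv, hμ, ⟨hsk.cont_xi, hsk.mem_closure, hint.mono_set Ioc_subset_Icc_self,
    fun x y hx hxy hy => ?_, ae_restrict_of_ae (hnormal.mono fun q hq => hq.2)⟩,
    hμIoc⟩
  have hx' : x ∈ Icc 0 T := ⟨hx, hxy.trans hy⟩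
  have hy' : y ∈ Icc 0 T := ⟨hx.trans hxy, hy⟩
  rw [hsk.eq_add y hy', hsk.eq_add x hx', hφ y hy', hφ x hx', ← Icc_union_Ioc_eq_Icc hx hxy,
    setIntegral_union (disjoint_left.2 fun z hz hz' => hz'.1.not_ge hz.2) measurableSet_Ioc
      (hint.mono_set (Icc_subset_Icc le_rfl hx'.2))
      (hint.mono_set (Ioc_subset_Icc_self.trans (Icc_subset_Icc hx hy)))]
  abel

theorem eVariationOn_le_four_mul (hA : CondA D r₀) (hsk : IsSkorohod D T w ξ φ) {s t : ℝ}
    (hs : 0 ≤ s) (hst : s ≤ t) (ht : t ≤ T) :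
    eVariationOn ξ (Icc s t) ≤ 4 * eVariationOn w (Icc s t) := by
  obtain ⟨μ, nv, hμ, hrefl, hμV⟩ := hsk.exists_isReflectedOn
  obtain ⟨δ, hδ, hsmall⟩ := hsk.bv_phi.exists_pos_eVariationOn_Icc_le hsk.cont_phi (half_pos hA.1)
  refine eVariationOn_Icc_le_mul_of_edist_le_of_sub_lt hst hδ fun p q hp hpq hq hpqδ => ?_
  have hp' : 0 ≤ p := hs.trans hp
  have hq' : q ≤ T := hq.trans ht
  exact (hrefl.mono hp' hq').edist_le_four_mul hA hpq
    ((hμV p q hp' hpq hq').trans_le (hsmall p q hp' hpq hq' hpqδ))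

end IsSkorohod

end RSDE

theorem tv_xi_le_tv_w_general {d : ℕ} (D : Set (RSDE.E d)) (r₀ : ℝ) (hA : RSDE.CondA D r₀)
    (T : ℝ) (w ξ φ : ℝ → RSDE.E d)
    (hwbv : BoundedVariationOn w (Icc 0 T))
    (hsk : RSDE.IsSkorohod D T w ξ φ) :
    ∀ s t : ℝ, 0 ≤ s → s ≤ t → t ≤ T →
      RSDE.tv ξ s t ≤ 2 * (Real.sqrt 2 + 1) * RSDE.tv w s t := by
  intro s t hs hst ht
  have hw : eVariationOn w (Icc s t) ≠ ⊤ := hwbv.mono (Icc_subset_Icc hs ht)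
  have hξ : RSDE.tv ξ s t ≤ 4 * RSDE.tv w s t := by
    simpa [RSDE.tv] using ENNReal.toReal_mono (ENNReal.mul_ne_top ENNReal.ofNat_ne_top hw)
      (hsk.eVariationOn_le_four_mul hA hs hst ht)
  have h4 : (4 : ℝ) ≤ 2 * (Real.sqrt 2 + 1) := by linarith [Real.one_lt_sqrt_two]
  exact hξ.trans (mul_le_mul_of_nonneg_right h4 ENNReal.toReal_nonneg)

/-- **Total variation estimate for the reflected path** (Lemma 2.3). Under condition (A),
if `w` is a continuous path of bounded variation whose Skorohod problem has a solution
`(ξ, φ)`, then `‖ξ‖_{[s,t]} ≤ 2(√2 + 1)‖w‖_{[s,t]}`. -/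
theorem tv_xi_le_tv_w {d : ℕ} (D : Set (RSDE.E d)) (hDne : D.Nonempty)
    (hDopen : IsOpen D) (r₀ : ℝ) (hA : RSDE.CondA D r₀)
    (T : ℝ) (hT : 0 ≤ T) (w ξ φ : ℝ → RSDE.E d)
    (hw : ContinuousOn w (Icc 0 T)) (hwbv : BoundedVariationOn w (Icc 0 T))
    (hw0 : w 0 ∈ closure D) (hsk : RSDE.IsSkorohod D T w ξ φ) :
    ∀ s t : ℝ, 0 ≤ s → s ≤ t → t ≤ T →
      RSDE.tv ξ s t ≤ 2 * (Real.sqrt 2 + 1) * RSDE.tv w s t :=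
  tv_xi_le_tv_w_general D r₀ hA T w ξ φ hwbv hsk
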